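/- No sequence rule can be both rank-aware and copy-robust. -/

import Mathlib

/-!
Formalization of the ranked-delegation (liquid democracy) setting of
"Liquid Democracy with Ranked Delegations".

Vertices are natural numbers.  An instance carries the vertex set `V`,
the edge set `E`, the distinguished set `C` of casting voters (which have
no outgoing edges), and a rank function such that for every vertex the
ranks of its outgoing edges are exactly `{1, ..., outdeg}`.
-/

namespace RankedDelegation

/-- A ranked delegation instance `(G, r)`. -/
structure Instance where
  V : Finset ℕ
  E : Finset (ℕ × ℕ)
  C : Finset ℕ
  C_sub : C ⊆ V
  edge_mem : ∀ e ∈ E, e.1 ∈ V ∧ e.2 ∈ V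
  C_no_out : ∀ e ∈ E, e.1 ∉ C
  rank : ℕ × ℕ → ℕ
  rank_prop : ∀ v ∈ V,
    (E.filter (fun e => e.1 = v)).image rank =
      Finset.Icc 1 (E.filter (fun e => e.1 = v)).card

/-- A simple path from `v` to a casting voter, represented by its list of
vertices (so it has at least one edge, i.e. at least two vertices). -/
def IsDelegPath (G : Instance) (v : ℕ) (p : List ℕ) : Prop :=
  2 ≤ p.length ∧ p.head? = some v ∧ p.Nodup ∧
  (∀ e ∈ p.zip p.tail, e ∈ G.E) ∧
  (∃ c ∈ G.C, p.getLast? = some c)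

/-- Delegating voters: members of `V` admitting a path to a casting voter.
(Casting voters have no outgoing edges, so they are never `Delegating`.) -/
def Delegating (G : Instance) (v : ℕ) : Prop :=
  v ∈ G.V ∧ ∃ p, IsDelegPath G v p

/-- Isolated voters: neither casting nor delegating. -/
def Isolated (G : Instance) (v : ℕ) : Prop :=
  v ∈ G.V ∧ v ∉ G.C ∧ ¬ Delegating G v

/-- The rank sequence `s(P)` of a path `P`. -/
def seqOf (G : Instance) (p : List ℕ) : List ℕ :=
  (p.zip p.tail).map G.rank

/-- `S_v`, the set of rank sequences of paths from `v` to casting voters. -/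
def Seqs (G : Instance) (v : ℕ) : Set (List ℕ) :=
  {s | ∃ p, IsDelegPath G v p ∧ seqOf G p = s}

/-- Membership in `𝒮`: all entries are positive. -/
def PosSeq (s : List ℕ) : Prop := ∀ x ∈ s, 1 ≤ x

/-- Two sequences are comparable if some instance realizes `S_v = {s, s'}`. -/
def Comparable (s s' : List ℕ) : Prop :=
  ∃ (G : Instance) (v : ℕ), Seqs G v = {s, s'}

/-- A set of sequences is comparable if its elements are pairwise comparable. -/
def ComparableSet (S : Set (List ℕ)) : Prop := S.Pairwise Comparable

/-- `R` restricted to any comparable subset of `𝒮` is a (strict) linear order. -/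
def LinearOnComparable (R : List ℕ → List ℕ → Prop) : Prop :=
  ∀ S : Set (List ℕ), ComparableSet S →
    (∀ s ∈ S, ¬ R s s) ∧
    (∀ s ∈ S, ∀ t ∈ S, ∀ u ∈ S, R s t → R t u → R s u) ∧
    (∀ s ∈ S, ∀ t ∈ S, s ≠ t → R s t ∨ R t s)

/-- `s` is the `R`-maximum (i.e. `R`-best) element of `S`. -/
def IsMaxOf (R : List ℕ → List ℕ → Prop) (S : Set (List ℕ)) (s : List ℕ) : Prop :=
  s ∈ S ∧ ∀ t ∈ S, t ≠ s → R s t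

/-- A delegation rule assigns to every instance and every delegating voter a
path from that voter to a casting voter. -/
structure DelegationRule where
  path : Instance → ℕ → List ℕ
  valid : ∀ G v, Delegating G v → IsDelegPath G v (path G v)

/-- `f` is a sequence rule induced by the relation `R`. -/
def IsSequenceRule (f : DelegationRule) (R : List ℕ → List ℕ → Prop) : Prop :=
  LinearOnComparable R ∧
  ∀ (G : Instance) (v : ℕ), Delegating G v →
    IsMaxOf R (Seqs G v) (seqOf G (f.path G v))

/-- Confluence: in the union of all selected paths, every delegating voter
has outdegree exactly one. -/
def Confluent (f : DelegationRule) : Prop :=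
  ∀ (G : Instance) (v : ℕ), Delegating G v →
    ∃! w : ℕ, ∃ u : ℕ, Delegating G u ∧
      (v, w) ∈ (f.path G u).zip (f.path G u).tail

/-- The (strict) lexicographic order `▷_lex` ("better than"). -/
def lexRel (s s' : List ℕ) : Prop := List.Lex (· < ·) s s'

/-- The order inducing breadth-first delegation: shorter first, ties by lex. -/
def bfdRel (s s' : List ℕ) : Prop :=
  s.length < s'.length ∨ (s.length = s'.length ∧ lexRel s s')

/-- The order inducing MinSum: smaller sum of ranks first, ties by lex. -/
def minSumRel (s s' : List ℕ) : Prop :=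
  s.sum < s'.sum ∨ (s.sum = s'.sum ∧ lexRel s s')

/-- `σ(s)`: the entries of `s` sorted in non-increasing order. -/
def sortDesc (s : List ℕ) : List ℕ := ((s : Multiset ℕ).sort (· ≤ ·)).reverse

/-- The order `▷_σ` inducing Leximax. -/
def leximaxRel (s s' : List ℕ) : Prop :=
  lexRel (sortDesc s) (sortDesc s') ∨ (sortDesc s = sortDesc s' ∧ lexRel s s')

/-- The set `F` of minimum-rank edges with head in `A` and tail outside `A`. -/
def diffF (G : Instance) (A : Finset ℕ) : Finset (ℕ × ℕ) :=
  G.E.filter (fun e => e.2 ∈ A ∧ e.1 ∉ A ∧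
    ∀ e' ∈ G.E, e'.2 ∈ A → e'.1 ∉ A → G.rank e ≤ G.rank e')

/-- The set of assigned voters after `k` rounds of the diffusion process
(initially the casting voters). -/
def diffA (G : Instance) : ℕ → Finset ℕ
  | 0 => G.C
  | k + 1 => diffA G k ∪ (diffF G (diffA G k)).image Prod.fst

/-- `f` is the Diffusion rule: every delegating voter `v` is assigned, at the
round where it acquires a minimum-rank edge `(v, w)` into the assigned set,
the path consisting of `(v, w)` followed by the path of `w`. -/
def IsDiffusion (f : DelegationRule) : Prop :=
  ∀ (G : Instance) (v : ℕ), Delegating G v →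
    ∃ (k : ℕ) (w : ℕ), (v, w) ∈ diffF G (diffA G k) ∧
      ((w ∈ G.C ∧ f.path G v = [v, w]) ∨
       (Delegating G w ∧ f.path G v = v :: f.path G w))

/-- Maximum entry of a sequence (0 for the empty sequence, by convention). -/
def maxR (s : List ℕ) : ℕ := s.foldr max 0

/-- Fuelled version of the diffusion order on sequences without a joint
prefix; the fuel only has to exceed the length of the first argument. -/
def diffRelAux : ℕ → List ℕ → List ℕ → Prop
  | 0, _, _ => False
  | n + 1, s, s' =>
    maxR s < maxR s' ∨
    (maxR s = maxR s' ∧ s.count (maxR s) < s'.count (maxR s')) ∨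
    (maxR s = maxR s' ∧ s.count (maxR s) = s'.count (maxR s') ∧
      (s.takeWhile (fun x => x ≠ maxR s) = [] ∨
        diffRelAux n (s.takeWhile (fun x => x ≠ maxR s))
          (s'.takeWhile (fun x => x ≠ maxR s'))))

/-- The diffusion order `▷_diff` for sequences with no joint prefix. -/
def diffRel0 (s s' : List ℕ) : Prop := diffRelAux (s.length + 1) s s'

/-- Strip the longest common prefix of two sequences. -/
def stripCP : List ℕ → List ℕ → List ℕ × List ℕ
  | a :: s, b :: s' => if a = b then stripCP s s' else (a :: s, b :: s')
  | s, s' => (s, s')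

/-- The diffusion order `▷_diff`. -/
def diffRel (s s' : List ℕ) : Prop :=
  diffRel0 (stripCP s s').1 (stripCP s s').2

/-- The relative voting weight `ω_f(G, r, c)` of a voter `c`. -/
noncomputable def weight (f : DelegationRule) (G : Instance) (c : ℕ) : ℚ :=
  ((Set.ncard {d | Delegating G d ∧ (f.path G d).getLast? = some c} : ℚ) + 1) /
    ((G.C.card : ℚ) + (Set.ncard {d | Delegating G d} : ℚ))

/-- Guru-participation: deleting the outgoing edges of a delegating voter `v`
(keeping the casting voters unchanged) does not decrease the relative weight
of any casting voter other than `v`'s representative. -/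
def GuruParticipation (f : DelegationRule) : Prop :=
  ∀ (G G' : Instance) (v c : ℕ),
    Delegating G v → (f.path G v).getLast? = some c →
    G'.V = G.V → G'.C = G.C → G'.rank = G.rank →
    G'.E = G.E.filter (fun e => e.1 ≠ v) →
    ∀ u ∈ G.C, u ≠ c → weight f G u ≤ weight f G' u

/-- Copy-robustness: if a delegating voter `v` is assigned a path of length
one ending in the casting voter `c`, then turning `v` into a casting voter
(deleting its outgoing edges) preserves the joint weight of `v` and `c`. -/
def CopyRobust (f : DelegationRule) : Prop :=
  ∀ (G G' : Instance) (v c : ℕ),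
    Delegating G v → (f.path G v).length = 2 →
    (f.path G v).getLast? = some c →
    G'.V = G.V → G'.C = insert v G.C → G'.rank = G.rank →
    G'.E = G.E.filter (fun e => e.1 ≠ v) →
    weight f G c = weight f G' c + weight f G' v

/-- A directed cycle through the edge set `B`, given as a nonempty list of
consecutive edges whose last edge returns to the head of the first one. -/
def IsEdgeCycle (B : Finset (ℕ × ℕ)) (l : List (ℕ × ℕ)) : Prop :=
  l ≠ [] ∧ (∀ e ∈ l, e ∈ B) ∧ List.Chain' (fun e e' => e.2 = e'.1) l ∧
  ∃ e₁ e₂, l.head? = some e₁ ∧ l.getLast? = some e₂ ∧ e₂.2 = e₁.1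

def Acyclic (B : Finset (ℕ × ℕ)) : Prop := ¬ ∃ l, IsEdgeCycle B l

/-- Edges of the reduced graph `Ḡ`: edges of `G` between voters of `C ∪ D`. -/
def InReduced (G : Instance) (e : ℕ × ℕ) : Prop :=
  e ∈ G.E ∧ (e.1 ∈ G.C ∨ Delegating G e.1) ∧ (e.2 ∈ G.C ∨ Delegating G e.2)

/-- A `C`-branching in the reduced graph: an acyclic set of reduced edges in
which every delegating voter has outdegree exactly one. -/
def IsCBranching (G : Instance) (B : Finset (ℕ × ℕ)) : Prop :=
  (∀ e ∈ B, InReduced G e) ∧ Acyclic B ∧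
  ∀ v : ℕ, Delegating G v → ∃! w : ℕ, (v, w) ∈ B

/-- The Borda score of a branching: the sum of the ranks of its edges. -/
def score (G : Instance) (B : Finset (ℕ × ℕ)) : ℕ := ∑ e ∈ B, G.rank e

/-- The rank of the (unique) outgoing edge of `v` in `B` (0 if none). -/
def rankOut (G : Instance) (B : Finset (ℕ × ℕ)) (v : ℕ) : ℕ :=
  ∑ e ∈ B.filter (fun e => e.1 = v), G.rank e

/-- Priority-order tie-breaking: `B` is preferred to `B'` if some (delegating)
voter `v₀` gets a strictly smaller rank in `B`, while all delegating voters
with smaller priority get equal ranks in `B` and `B'`. -/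
def PrioPref (G : Instance) (π : ℕ → ℕ) (B B' : Finset (ℕ × ℕ)) : Prop :=
  ∃ v₀ : ℕ, Delegating G v₀ ∧ rankOut G B v₀ < rankOut G B' v₀ ∧
    ∀ v : ℕ, Delegating G v → π v < π v₀ → rankOut G B v = rankOut G B' v

/-- `f` is BordaBranching with priority order `π`: on every instance the
paths of `f` are read off from a rank-sum-minimal `C`-branching which is
moreover preferred (w.r.t. `π`) to every other minimal `C`-branching. -/
def IsBordaBranching (f : DelegationRule) (π : ℕ → ℕ) : Prop :=
  Function.Injective π ∧
  ∀ G : Instance, ∃ B : Finset (ℕ × ℕ), IsCBranching G B ∧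
    (∀ B', IsCBranching G B' → score G B ≤ score G B') ∧
    (∀ B', IsCBranching G B' → score G B' = score G B → B' ≠ B → PrioPref G π B B') ∧
    (∀ v : ℕ, Delegating G v → ∀ e ∈ (f.path G v).zip (f.path G v).tail, e ∈ B)

/-- Weakly lexicographic: on comparable sequences of equal length differing
only in the last entry, `R` agrees with the lexicographic order. -/
def WeaklyLex (R : List ℕ → List ℕ → Prop) : Prop :=
  ∀ (t : List ℕ) (a b : ℕ), Comparable (t ++ [a]) (t ++ [b]) →
    (R (t ++ [a]) (t ++ [b]) ↔ lexRel (t ++ [a]) (t ++ [b]))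

/-- Strongly lexicographic: on comparable sequences of equal length, `R`
agrees with the lexicographic order. -/
def StronglyLex (R : List ℕ → List ℕ → Prop) : Prop :=
  ∀ s s' : List ℕ, Comparable s s' → s.length = s'.length →
    (R s s' ↔ lexRel s s')

/-- Rank-awareness: among comparable sequences, one with a strictly smaller
maximum entry is preferred. -/
def RankAware (R : List ℕ → List ℕ → Prop) : Prop :=
  ∀ s s' : List ℕ, Comparable s s' → maxR s < maxR s' → R s s'

/-- Two sequences have no joint prefix (their heads differ, if any). -/
def NoJointPrefix (s s' : List ℕ) : Prop :=
  ∀ a : ℕ, ¬ (s.head? = some a ∧ s'.head? = some a)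

/-- Truncation: comparisons may be decided on the parts before a dominating
joint entry `x`. -/
def Truncation (R : List ℕ → List ℕ → Prop) : Prop :=
  ∀ s s' t t' : List ℕ, PosSeq s → PosSeq s' → PosSeq t → PosSeq t' →
    Comparable s s' → NoJointPrefix s s' →
    ∀ x : ℕ, 1 ≤ x → maxR t < x → maxR t' < x →
    R (s ++ x :: t) (s' ++ x :: t') → R s s'

/-!
Voter 3 can delegate with rank 2 to the casting voter 1, or with rank 1 to voter 4, whose only
route to a casting voter is its rank-3 edge to voter 2 (voters 5 and 6 are dead ends that push
that rank up to 3). Rank-awareness prefers `[2]` to `[1, 3]`, so 3 goes straight to 1 and 2 carries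
the votes of 2 and 4 only. Once 4 copies the vote of 2 and becomes a casting voter, rank-awareness
prefers `[1]` to `[2]` and 3 switches to 4: the joint weight of 2 and 4 grows from 2/4 to 3/4,
contradicting copy-robustness.
-/

theorem _root_.List.exists_mem_zip_tail_of_mem {α : Type*} {x : α} :
    ∀ {p : List α}, x ∈ p → 2 ≤ p.length → ∃ e ∈ p.zip p.tail, e.1 = x ∨ e.2 = x
  | a :: b :: r, hx, _ => by
    rcases List.mem_cons.1 hx with rfl | hx
    · exact ⟨(x, b), by simp, Or.inl rfl⟩
    · rcases r with _ | ⟨c, r⟩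
      · exact ⟨(a, b), by simp, Or.inr (List.mem_singleton.1 hx).symm⟩
      · obtain ⟨e, he, hxe⟩ := List.exists_mem_zip_tail_of_mem hx (by simp)
        exact ⟨e, by simp_all, hxe⟩

def castingWalks (G : Instance) : ℕ → ℕ → Finset (List ℕ)
  | 0, _ => ∅
  | n + 1, v => (if v ∈ G.C then {[v]} else ∅) ∪
      (G.E.filter (·.1 = v)).biUnion fun e => (castingWalks G n e.2).image (v :: ·)

def delegPaths (G : Instance) (v : ℕ) : Finset (List ℕ) :=
  (castingWalks G G.V.card v).filter fun p => 2 ≤ p.length ∧ p.Nodup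

def delegators (G : Instance) : Finset ℕ :=
  G.V.filter fun v => (delegPaths G v).Nonempty

section Paths

variable {G : Instance} {v : ℕ} {p : List ℕ}

theorem mem_castingWalks {n : ℕ} :
    p ∈ castingWalks G n v ↔ p.length ≤ n ∧ p.head? = some v ∧
      (∀ e ∈ p.zip p.tail, e ∈ G.E) ∧ ∃ c ∈ G.C, p.getLast? = some c := by
  induction n generalizing v p with
  | zero => cases p <;> simp [castingWalks]
  | succ n ih =>
    rcases p with _ | ⟨a, _ | ⟨b, q⟩⟩ <;> by_cases hv : v ∈ G.C <;>
      simp [castingWalks, ih, hv] <;> aesop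

theorem IsDelegPath.mem_V (hp : IsDelegPath G v p) {x : ℕ} (hx : x ∈ p) : x ∈ G.V := by
  obtain ⟨e, he, rfl | rfl⟩ := List.exists_mem_zip_tail_of_mem hx hp.1
  exacts [(G.edge_mem e (hp.2.2.2.1 e he)).1, (G.edge_mem e (hp.2.2.2.1 e he)).2]

theorem IsDelegPath.length_le (hp : IsDelegPath G v p) : p.length ≤ G.V.card := by
  rw [← List.toFinset_card_of_nodup hp.2.2.1]
  exact Finset.card_le_card fun x hx => hp.mem_V (List.mem_toFinset.1 hx)

theorem mem_delegPaths : p ∈ delegPaths G v ↔ IsDelegPath G v p := by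
  refine ⟨fun h => ?_, fun h => ?_⟩
  · obtain ⟨hw, hlen, hnd⟩ := Finset.mem_filter.1 h
    obtain ⟨-, hhead, hE, hC⟩ := mem_castingWalks.1 hw
    exact ⟨hlen, hhead, hnd, hE, hC⟩
  · exact Finset.mem_filter.2
      ⟨mem_castingWalks.2 ⟨h.length_le, h.2.1, h.2.2.2⟩, h.1, h.2.2.1⟩

theorem mem_delegators : v ∈ delegators G ↔ Delegating G v := by
  rw [delegators, Finset.mem_filter]
  simp only [Delegating, Finset.Nonempty, mem_delegPaths]

theorem seqs_eq_pair {q : List ℕ} (h : delegPaths G v = {p, q}) :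
    Seqs G v = {seqOf G p, seqOf G q} := by
  have hS : Seqs G v = (delegPaths G v).image (seqOf G) := by
    ext s
    simp [Seqs, mem_delegPaths]
  rw [hS, h, Finset.image_insert, Finset.image_singleton, Finset.coe_pair]

end Paths

theorem weight_eq_card (f : DelegationRule) (G : Instance) (c : ℕ) :
    weight f G c = (((delegators G).filter fun d => (f.path G d).getLast? = some c).card + 1) /
      (G.C.card + (delegators G).card) := by
  have hA : {d | Delegating G d ∧ (f.path G d).getLast? = some c} =
      ↑((delegators G).filter fun d => (f.path G d).getLast? = some c) := by
    ext d
    simp [mem_delegators]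
  have hD : {d | Delegating G d} = ↑(delegators G) := by
    ext d
    simp [mem_delegators]
  rw [weight, hA, hD, Set.ncard_coe_finset, Set.ncard_coe_finset]

theorem Comparable.symm {s t : List ℕ} (h : Comparable s t) : Comparable t s :=
  let ⟨G, v, hS⟩ := h
  ⟨G, v, hS.trans (Set.pair_comm s t)⟩

theorem LinearOnComparable.asymm {R : List ℕ → List ℕ → Prop} (hR : LinearOnComparable R)
    {s t : List ℕ} (hc : Comparable s t) (hst : R s t) : ¬ R t s := by
  have hS : ComparableSet {s, t} := by
    rintro a (rfl | rfl) b (rfl | rfl) hab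
    · exact absurd rfl hab
    · exact hc
    · exact hc.symm
    · exact absurd rfl hab
  obtain ⟨hirr, htrans, -⟩ := hR _ hS
  exact fun hts => hirr s (by simp) (htrans s (by simp) t (by simp) s (by simp) hst hts)

section SequenceRule

variable {f : DelegationRule} {R : List ℕ → List ℕ → Prop} {G : Instance} {v : ℕ}

theorem path_mem_delegPaths (hv : Delegating G v) : f.path G v ∈ delegPaths G v :=
  mem_delegPaths.2 (f.valid G v hv)

theorem path_eq_of_delegPaths_eq_singleton (hv : Delegating G v) {p : List ℕ}
    (h : delegPaths G v = {p}) : f.path G v = p :=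
  Finset.mem_singleton.1 (h ▸ path_mem_delegPaths hv)

theorem IsSequenceRule.seqOf_path_eq (hf : IsSequenceRule f R) (hv : Delegating G v)
    {s t : List ℕ} (hS : Seqs G v = {s, t}) (hst : R s t) : seqOf G (f.path G v) = s := by
  obtain ⟨hmem, hmax⟩ := hf.2 G v hv
  rw [hS] at hmem
  rcases hmem with h | h
  · exact h
  · by_contra hne
    exact hf.1.asymm ⟨G, v, hS⟩ hst (h ▸ hmax s (hS ▸ Or.inl rfl) (Ne.symm hne))

theorem IsSequenceRule.path_eq_of_rel (hf : IsSequenceRule f R) (hv : Delegating G v)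
    {p q : List ℕ} (hpq : delegPaths G v = {p, q}) (hne : seqOf G p ≠ seqOf G q)
    (hR : R (seqOf G p) (seqOf G q)) : f.path G v = p := by
  have hmem := path_mem_delegPaths (f := f) hv
  rw [hpq, Finset.mem_insert, Finset.mem_singleton] at hmem
  rcases hmem with h | h
  · exact h
  · exact absurd (h ▸ hf.seqOf_path_eq hv (seqs_eq_pair hpq) hR) hne.symm

end SequenceRule

def detourRank : ℕ × ℕ → ℕ
  | (3, 1) => 2
  | (4, 6) => 2
  | (4, 2) => 3
  | _ => 1

def detour : Instance where
  V := {1, 2, 3, 4, 5, 6}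
  E := {(3, 4), (3, 1), (4, 5), (4, 6), (4, 2)}
  C := {1, 2}
  C_sub := by decide
  edge_mem := by decide
  C_no_out := by decide
  rank := detourRank
  rank_prop := by decide

def detourCopy : Instance where
  V := {1, 2, 3, 4, 5, 6}
  E := {(3, 4), (3, 1)}
  C := {1, 2, 4}
  C_sub := by decide
  edge_mem := by decide
  C_no_out := by decide
  rank := detourRank
  rank_prop := by decide

theorem delegPaths_detour_three : delegPaths detour 3 = {[3, 1], [3, 4, 2]} := by decide

theorem delegPaths_detour_four : delegPaths detour 4 = {[4, 2]} := by decide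

theorem delegPaths_detourCopy_three : delegPaths detourCopy 3 = {[3, 4], [3, 1]} := by decide

theorem delegators_detour : delegators detour = {3, 4} := by decide

theorem delegators_detourCopy : delegators detourCopy = {3} := by decide

/-- no sequence rule is both rank-aware and copy-robust. -/
theorem no_rank_aware_copy_robust (f : DelegationRule)
    (R : List ℕ → List ℕ → Prop) (hf : IsSequenceRule f R) :
    ¬ (RankAware R ∧ CopyRobust f) := by
  rintro ⟨hRA, hCR⟩
  have h3 : f.path detour 3 = [3, 1] :=
    hf.path_eq_of_rel (mem_delegators.1 (by decide)) delegPaths_detour_three (by decide)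
      (hRA _ _ ⟨_, _, seqs_eq_pair delegPaths_detour_three⟩ (by decide))
  have h4 : f.path detour 4 = [4, 2] :=
    path_eq_of_delegPaths_eq_singleton (mem_delegators.1 (by decide)) delegPaths_detour_four
  have h3' : f.path detourCopy 3 = [3, 4] :=
    hf.path_eq_of_rel (mem_delegators.1 (by decide)) delegPaths_detourCopy_three (by decide)
      (hRA _ _ ⟨_, _, seqs_eq_pair delegPaths_detourCopy_three⟩ (by decide))
  have hw := hCR detour detourCopy 4 2 (mem_delegators.1 (by decide)) (by rw [h4]; rfl)
    (by rw [h4]; rfl) rfl (by decide) rfl (by decide)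
  simp only [weight_eq_card, delegators_detour, delegators_detourCopy, Finset.filter_insert,
    Finset.filter_singleton, h3, h4, h3'] at hw
  norm_num [detour, detourCopy] at hw

end RankedDelegation
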